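/- Let I = I(C_5) ⊆ K[a,b,c,d,e] be the edge ideal of the 5-cycle C_5 with edges ab, bc, cd, de, ea. Then v(I^{n+1}) = 2n + 1 for all n ≥ 1. -/

import Mathlib

open MvPolynomial

noncomputable section

/-- The `v`-number of a graded ideal `I ⊆ K[x_1,…,x_t]`: the least `k ≥ 0` such that there is a
homogeneous polynomial `f` of degree `k` with `(I : f)` an associated prime of `S/I`. -/
def vNumber {σ K : Type*} [Field K] (I : Ideal (MvPolynomial σ K)) : ℕ :=
  sInf {k : ℕ | ∃ f : MvPolynomial σ K, f.IsHomogeneous k ∧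
    Submodule.colon I (Ideal.span {f}) ∈
      associatedPrimes (MvPolynomial σ K) (MvPolynomial σ K ⧸ I)}

/-- The edge ideal of a simple graph: generated by `x_i * x_j` for edges `{x_i, x_j}`. -/
def edgeIdeal (K : Type*) [Field K] {V : Type*} (G : SimpleGraph V) :
    Ideal (MvPolynomial V K) :=
  Ideal.span {m | ∃ i j, G.Adj i j ∧ m = X i * X j}

/-- `I` is a monomial ideal: generated by a set of monomials. -/
def IsMonomialIdeal {σ K : Type*} [Field K] (I : Ideal (MvPolynomial σ K)) : Prop :=
  ∃ A : Set (σ →₀ ℕ), I = Ideal.span ((fun a => (monomial a (1 : K))) '' A)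

/-- The graded maximal ideal `𝔪 = ⟨x_1,…,x_t⟩`. -/
def maxIdeal (K : Type*) [Field K] (σ : Type*) : Ideal (MvPolynomial σ K) :=
  Ideal.span (Set.range (X : σ → MvPolynomial σ K))

/-- `α(I)`: the minimum degree of a nonzero element of `I`. -/
def alphaNumber {σ K : Type*} [Field K] (I : Ideal (MvPolynomial σ K)) : ℕ :=
  sInf {d : ℕ | ∃ f ∈ I, f ≠ 0 ∧ f.totalDegree = d}

/-- Exponent vectors of the minimal monomial generators of a monomial ideal `I`:
monomials in `I` none of whose proper divisors lies in `I`. -/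
def minimalGenerators {σ K : Type*} [Field K] (I : Ideal (MvPolynomial σ K)) :
    Set (σ →₀ ℕ) :=
  {a | (monomial a (1 : K)) ∈ I ∧
    ∀ b : σ →₀ ℕ, b ≤ a → b ≠ a → (monomial b (1 : K)) ∉ I}

/-!
Vertex `i : Fin 5` of `cycleGraph 5` is the variable `x_{i+1}`.

For `f = x₃(x₄x₅)ⁿ` one has `(I^{n+1} : f) = (x₁, x₂, x₄)`, a prime ideal generated by variables.
For `⊆`, kill `x₁, x₂`: this sends `I` into `(x₄)`, so `x₄^{n+1}` divides the image of `p f`, and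
since `x₄` is prime and divides neither `x₃` nor `x₅`, it divides the image of `p`; `⊇` comes from
factorizations into edges such as `x₁ f = (x₅x₁)(x₃x₄)(x₄x₅)^{n-1}`.
Conversely, a prime `(I^{n+1} : f)` contains `I`, hence a variable `x`, and then
`x f ∈ I^{n+1} ⊆ 𝔪^{2n+2}` forces `deg f ≥ 2n + 1`.
-/

section KillVars

variable {σ R : Type*} [CommRing R]

def killVars (s : Set σ) : MvPolynomial σ R →ₐ[R] MvPolynomial σ R :=
  aeval (sᶜ.indicator X)

theorem killVars_X_of_mem {s : Set σ} {i : σ} (hi : i ∈ s) : killVars (R := R) s (X i) = 0 := by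
  simp [killVars, hi]

theorem killVars_X_of_notMem {s : Set σ} {i : σ} (hi : i ∉ s) :
    killVars (R := R) s (X i) = X i := by
  simp [killVars, hi]

theorem sub_killVars_mem_span_X_image (s : Set σ) (p : MvPolynomial σ R) :
    p - killVars s p ∈ Ideal.span (X '' s) := by
  induction p using MvPolynomial.induction_on with
  | C a => simp [killVars]
  | add p q hp hq => simpa only [map_add, add_sub_add_comm] using add_mem hp hq
  | mul_X p i hp =>
    have hXi : (X i : MvPolynomial σ R) - killVars s (X i) ∈ Ideal.span (X '' s) := by
      by_cases hi : i ∈ s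
      · simpa [killVars_X_of_mem hi] using Ideal.subset_span (Set.mem_image_of_mem X hi)
      · simp [killVars_X_of_notMem hi]
    rw [map_mul, show p * X i - killVars s p * killVars s (X i) =
      (p - killVars s p) * X i + killVars s p * (X i - killVars s (X i)) by ring]
    exact add_mem (Ideal.mul_mem_right _ _ hp) (Ideal.mul_mem_left _ _ hXi)

theorem ker_killVars (s : Set σ) :
    RingHom.ker (killVars (R := R) s) = Ideal.span (X '' s) := by
  refine le_antisymm (fun p hp => ?_) ?_
  · simpa [RingHom.mem_ker.mp hp] using sub_killVars_mem_span_X_image s p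
  · rw [Ideal.span_le]
    rintro _ ⟨i, hi, rfl⟩
    exact killVars_X_of_mem hi

theorem isPrime_span_X_image [IsDomain R] (s : Set σ) :
    (Ideal.span (X '' s : Set (MvPolynomial σ R))).IsPrime := by
  rw [← ker_killVars]
  exact RingHom.ker_isPrime _

theorem mem_span_X_image_of_killVars_mem {s t : Set σ} (hst : s ⊆ t) {p : MvPolynomial σ R}
    (hp : killVars s p ∈ Ideal.span (X '' t)) : p ∈ Ideal.span (X '' t) := by
  have hsub := Ideal.span_mono (Set.image_mono hst) (sub_killVars_mem_span_X_image s p)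
  simpa using add_mem hsub hp

end KillVars

theorem MvPolynomial.IsHomogeneous.le_of_mem_pow_idealOfVars {σ R : Type*} [CommSemiring R] {f : MvPolynomial σ R}
    {k D : ℕ} (hf : f.IsHomogeneous k) (hf0 : f ≠ 0) (h : f ∈ idealOfVars σ R ^ D) : D ≤ k := by
  obtain ⟨d, hd⟩ := ne_zero_iff.mp hf0
  have hdeg : d.degree = k := by
    by_contra hne
    exact hd (hf.coeff_eq_zero hne)
  exact hdeg ▸ (mem_pow_idealOfVars_iff D f).mp h d (mem_support_iff.mpr hd)

theorem Ideal.colon_mem_associatedPrimes_quotient {R : Type*} [CommRing R] {I : Ideal R} {f : R}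
    (h : (I.colon (Ideal.span {f})).IsPrime) :
    I.colon (Ideal.span {f}) ∈ associatedPrimes R (R ⧸ I) := by
  refine ⟨h, Ideal.Quotient.mk I f, ?_⟩
  suffices hcolon : (⊥ : Submodule R (R ⧸ I)).colon {Ideal.Quotient.mk I f} =
      I.colon (Ideal.span {f}) by
    rw [hcolon, h.radical]
  ext r
  rw [Submodule.mem_colon_singleton, Submodule.mem_bot, Ideal.mem_colon_span_singleton,
    Algebra.smul_def, Ideal.Quotient.algebraMap_eq, ← map_mul, Ideal.Quotient.eq_zero_iff_mem]

section EdgeIdeal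

variable {K V : Type*} [Field K] {G : SimpleGraph V}

theorem X_mul_X_mem_edgeIdeal {i j : V} (h : G.Adj i j) : X i * X j ∈ edgeIdeal K G :=
  Ideal.subset_span ⟨i, j, h, rfl⟩

theorem edgeIdeal_le_idealOfVars_sq (G : SimpleGraph V) :
    edgeIdeal K G ≤ idealOfVars V K ^ 2 := by
  rw [edgeIdeal, Ideal.span_le]
  rintro _ ⟨i, j, -, rfl⟩
  rw [sq]
  exact Ideal.mul_mem_mul (Ideal.subset_span ⟨i, rfl⟩) (Ideal.subset_span ⟨j, rfl⟩)

theorem two_mul_le_of_isPrime_colon_pow_edgeIdeal {a b : V} (hab : G.Adj a b) {m k : ℕ}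
    {f : MvPolynomial V K} (hf : f.IsHomogeneous k)
    (hQ : ((edgeIdeal K G ^ m).colon (Ideal.span {f})).IsPrime) : 2 * m ≤ k + 1 := by
  set J := edgeIdeal K G ^ m
  have hfJ : f ∉ J := fun h => hQ.ne_top <| (Ideal.eq_top_iff_one _).mpr <|
    Ideal.mem_colon_span_singleton.mpr (by rwa [one_mul])
  have hf0 : f ≠ 0 := by
    rintro rfl
    exact hfJ J.zero_mem
  have hJQ : (X a * X b) ^ m ∈ J.colon (Ideal.span {f}) :=
    Ideal.mem_colon_span_singleton.mpr <|
      J.mul_mem_right f (Ideal.pow_mem_pow (X_mul_X_mem_edgeIdeal hab) m)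
  obtain ⟨i, hi⟩ : ∃ i, X i ∈ J.colon (Ideal.span {f}) :=
    (hQ.mem_or_mem (hQ.mem_of_pow_mem m hJQ)).elim (⟨a, ·⟩) (⟨b, ·⟩)
  have hXf : X i * f ∈ idealOfVars V K ^ (2 * m) := by
    rw [pow_mul]
    exact Ideal.pow_right_mono (edgeIdeal_le_idealOfVars_sq G) m
      (Ideal.mem_colon_span_singleton.mp hi)
  have := ((isHomogeneous_X K i).mul hf).le_of_mem_pow_idealOfVars
    (mul_ne_zero (X_ne_zero i) hf0) hXf
  omega

end EdgeIdeal

section CycleGraphFive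

open SimpleGraph

variable {K : Type*} [Field K]

theorem map_killVars_edgeIdeal_cycleGraph_five_le :
    (edgeIdeal K (cycleGraph 5)).map (killVars {0, 1}) ≤ Ideal.span {X 3} := by
  rw [edgeIdeal, Ideal.map_span, Ideal.span_le]
  rintro _ ⟨_, ⟨i, j, hij, rfl⟩, rfl⟩
  rw [cycleGraph_adj] at hij
  fin_cases i <;> fin_cases j <;> simp_all [killVars, Ideal.mem_span_singleton]

theorem colon_pow_edgeIdeal_cycleGraph_five_le (n : ℕ) :
    (edgeIdeal K (cycleGraph 5) ^ (n + 1)).colon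
        (Ideal.span {(X 2 * (X 3 * X 4) ^ n : MvPolynomial (Fin 5) K)}) ≤
      Ideal.span (X '' {0, 1, 3}) := by
  intro p hp
  rw [Ideal.mem_colon_span_singleton] at hp
  refine mem_span_X_image_of_killVars_mem (s := {0, 1}) (by simp [Set.insert_subset_iff]) ?_
  set q := killVars {0, 1} p
  have hq : q * (X 2 * (X 3 * X 4) ^ n) ∈ Ideal.span {X 3} ^ (n + 1) := by
    have := Ideal.mem_map_of_mem (killVars {0, 1}) hp
    rw [Ideal.map_pow] at this
    simpa [q, killVars] using Ideal.pow_right_mono map_killVars_edgeIdeal_cycleGraph_five_le _ this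
  rw [Ideal.span_singleton_pow, Ideal.mem_span_singleton] at hq
  have hdvd : X 3 ∣ q * (X 2 * X 4 ^ n) := by
    refine (mul_dvd_mul_iff_left (pow_ne_zero n (X_ne_zero (3 : Fin 5)))).mp ?_
    convert hq using 1 <;> ring
  have hX3 : Prime (X 3 : MvPolynomial (Fin 5) K) := X_prime
  rcases hX3.dvd_or_dvd hdvd with h | h
  · exact Ideal.span_mono (by simp) (Ideal.mem_span_singleton.mpr h)
  · exfalso
    rcases hX3.dvd_or_dvd h with h | h
    · exact absurd (X_dvd_X.mp h) (by decide)
    · exact absurd (X_dvd_X.mp (hX3.dvd_of_dvd_pow h)) (by decide)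

theorem span_X_image_le_colon_pow_edgeIdeal_cycleGraph_five {n : ℕ} (hn : 1 ≤ n) :
    Ideal.span (X '' {0, 1, 3}) ≤
      (edgeIdeal K (cycleGraph 5) ^ (n + 1)).colon
        (Ideal.span {(X 2 * (X 3 * X 4) ^ n : MvPolynomial (Fin 5) K)}) := by
  have edge (i j : Fin 5) (h : (cycleGraph 5).Adj i j := by decide) :=
    X_mul_X_mem_edgeIdeal (K := K) h
  obtain ⟨m, rfl⟩ : ∃ m, n = m + 1 := ⟨n - 1, by omega⟩
  rw [Ideal.span_le]
  rintro _ ⟨i, hi, rfl⟩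
  rw [SetLike.mem_coe, Ideal.mem_colon_span_singleton, pow_succ' _ (m + 1)]
  rcases hi with rfl | rfl | rfl
  · convert Ideal.mul_mem_mul (edge 4 0)
      (Ideal.mul_mem_mul (edge 2 3) (Ideal.pow_mem_pow (edge 3 4) m)) using 1
    · rw [pow_succ']
    · ring
  · convert Ideal.mul_mem_mul (edge 1 2) (Ideal.pow_mem_pow (edge 3 4) (m + 1)) using 1
    ring
  · convert Ideal.mul_mem_mul (edge 2 3) (Ideal.pow_mem_pow (edge 3 4) (m + 1)) using 1
    ring

end CycleGraphFive

/-- for the edge ideal I of the 5-cycle, v(I^{n+1}) = 2n + 1 for all n ≥ 1. -/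
theorem vNumber_pow_edgeIdeal_C5 {K : Type*} [Field K] :
    ∀ n, 1 ≤ n →
      vNumber ((edgeIdeal K (SimpleGraph.cycleGraph 5)) ^ (n + 1)) = 2 * n + 1 := by
  intro n hn
  refine IsLeast.csInf_eq ⟨⟨X 2 * (X 3 * X 4) ^ n, ?_, ?_⟩, ?_⟩
  · have h := (isHomogeneous_X K (2 : Fin 5)).mul
      (((isHomogeneous_X K 3).mul (isHomogeneous_X K 4)).pow n)
    rwa [show 1 + (1 + 1) * n = 2 * n + 1 by ring] at h
  · refine Ideal.colon_mem_associatedPrimes_quotient ?_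
    rw [le_antisymm (colon_pow_edgeIdeal_cycleGraph_five_le n)
      (span_X_image_le_colon_pow_edgeIdeal_cycleGraph_five hn)]
    exact isPrime_span_X_image _
  · rintro k ⟨f, hf, hass⟩
    have := two_mul_le_of_isPrime_colon_pow_edgeIdeal
      (show (SimpleGraph.cycleGraph 5).Adj 0 1 by decide) hf hass.1
    omega
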